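/- Index ℝ²⁴ by pairs (c, r) ∈ Fin 6 × Fin 4 (column c, row r of the MOG). Let Ξ_a be the block-diagonal 24×24 real matrix whose entry at ((c,r),(c',r')) is 0 if c ≠ c', is 1/2 if c = c' and r = r', and is -1/2 if c = c' and r ≠ r'; let Ξ_b be the diagonal matrix with entry -1 at (c, 0) for every c and entry 1 elsewhere; and set Ξ := Ξ_a * Ξ_b. Define vectors λ_γ, λ_g : Fin 6 × Fin 4 → ℝ by λ_γ(0,0) = -3 and λ_γ(c,r) = 1 otherwise; λ_g(c,r) = 2 if exactly one of c, r is 0, and λ_g(c,r) = 0 otherwise. Then λ_γ ᵥ* Ξ = λ_g − λ_γ, (λ_g − λ_γ) ᵥ* Ξ = −λ_g, and (−λ_g) ᵥ* Ξ = λ_γ (row vectors acted on by right multiplication). -/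
import Mathlib


/-- The block-diagonal matrix `ξ_{24a}`: six copies of `ξ_{4a} = 1 - (1/2)J` along the six
MOG columns. Coordinates are indexed by (column, row) ∈ Fin 6 × Fin 4. -/
noncomputable def Xi24a : Matrix (Fin 6 × Fin 4) (Fin 6 × Fin 4) ℝ :=
  Matrix.of fun p q =>
    if p.1 = q.1 then (if p.2 = q.2 then 1/2 else -1/2) else 0

/-- The diagonal matrix `ξ_{24b}`: negation of MOG row 0. -/
noncomputable def Xi24b : Matrix (Fin 6 × Fin 4) (Fin 6 × Fin 4) ℝ :=
  Matrix.diagonal fun p => if p.2 = 0 then -1 else 1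

/-- `ξ_{24} = ξ_{24a} ξ_{24b}`. -/
noncomputable def Xi24 : Matrix (Fin 6 × Fin 4) (Fin 6 × Fin 4) ℝ := Xi24a * Xi24b

/-- The Leech lattice vector `λ_{γ₀}`: `-3` at position (0,0), `1` elsewhere. -/
noncomputable def lamGamma : Fin 6 × Fin 4 → ℝ :=
  fun p => if p = (0, 0) then -3 else 1

/-- The Leech lattice vector `λ_{g₀}`: `2` at positions where exactly one of the column and
the row index is `0`, and `0` elsewhere. -/
noncomputable def lamG : Fin 6 × Fin 4 → ℝ :=
  fun p => if (p.1 = 0 ∧ p.2 ≠ 0) ∨ (p.1 ≠ 0 ∧ p.2 = 0) then 2 else 0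


private lemma vecMul_Xi24a (v : Fin 6 × Fin 4 → ℝ) (p : Fin 6 × Fin 4) :
    Matrix.vecMul v Xi24a p = v p - (∑ r, v (p.1, r)) / 2 := by
  obtain ⟨c, r⟩ := p
  simp only [Matrix.vecMul, dotProduct, Xi24a, Matrix.of_apply, Fintype.sum_prod_type]
  rw [Finset.sum_eq_single c (by intro b _ hb; simp [hb]) (by simp)]
  simp only [if_pos rfl]
  fin_cases r <;> simp [Fin.sum_univ_four] <;> ring

private lemma vecMul_Xi24 (v : Fin 6 × Fin 4 → ℝ) (p : Fin 6 × Fin 4) :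
    Matrix.vecMul v Xi24 p =
      (v p - (∑ r, v (p.1, r)) / 2) * (if p.2 = 0 then -1 else 1) := by
  rw [Xi24, ← Matrix.vecMul_vecMul, Xi24b, Matrix.vecMul_diagonal, vecMul_Xi24a]

/-- The three-step cycle `λ_{γ₀} ↦ λ_{g₀} - λ_{γ₀} ↦ -λ_{g₀} ↦ λ_{γ₀}` under right
multiplication by `ξ_{24}`. -/
theorem lam_cycle_under_Xi24 :
    Matrix.vecMul lamGamma Xi24 = lamG - lamGamma ∧
    Matrix.vecMul (lamG - lamGamma) Xi24 = -lamG ∧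
    Matrix.vecMul (-lamG) Xi24 = lamGamma := by
  refine ⟨?_, ?_, ?_⟩ <;> funext p <;> obtain ⟨c, r⟩ := p <;>
    rw [vecMul_Xi24] <;>
    simp only [Fin.sum_univ_four, lamGamma, lamG, Pi.sub_apply, Pi.neg_apply, Prod.mk.injEq,
      Prod.ext_iff] <;>
    fin_cases c <;> fin_cases r <;> norm_num [Fin.ext_iff, show (3 : Fin 4) ≠ 0 from by decide]
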